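/- Let n ≥ 3 and λ > 0. For all y, η ∈ ℝⁿ with |y| ≥ λ, |η| ≥ λ and y ≠ η, the Green's function G_λ satisfies the two-sided bound: (1/(2λ²))·(|y|²−λ²)·(|η|²−λ²)·(λ/|y|)ⁿ·|y^λ−η|^{−n} ≤ σₙ·G_λ(y,η) ≤ (1/(2λ²))·(|y|²−λ²)·(|η|²−λ²)·|y−η|^{−n}. In particular G_λ(y,η) ≥ 0. -/

import Mathlib

/-!
Put `a = |y - η|` and `b = (|y|/λ)|y^λ - η|`. Expanding both squared norms gives the Kelvin
identity `b² = a² + (|y|² - λ²)(|η|² - λ²)/λ²`, so `a ≤ b` and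
`σₙ G_λ(y, η) = (a^{2-n} - b^{2-n})/(n - 2) = ∫_a^b t^{1-n} dt`. Squeezing `t^{-n}` between `b^{-n}`
and `a^{-n}` and using `∫_a^b t dt = (b² - a²)/2` gives both bounds.
-/

open Metric Set MeasureTheory

noncomputable section

abbrev Euc (n : ℕ) := EuclideanSpace ℝ (Fin n)

/-- The inverted point `y^λ = λ²y/|y|²`. -/
def invPt {n : ℕ} (lam : ℝ) (y : Euc n) : Euc n := (lam ^ 2 / ‖y‖ ^ 2) • y

/-- Surface measure `σₙ` of the unit sphere in `ℝⁿ` (equal to `n·vol(Bⁿ)`). -/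
def sphereArea (n : ℕ) : ℝ :=
  (n : ℝ) * (volume (Metric.ball (0 : Euc n) 1)).toReal

/-- The Dirichlet Green's function of `-Δ` on `ℝⁿ ∖ cl(B(0,λ))`. -/
def greenG (n : ℕ) (lam : ℝ) (y η : Euc n) : ℝ :=
  (1 / (((n : ℝ) - 2) * sphereArea n)) *
    (‖y - η‖ ^ ((2 : ℝ) - (n : ℝ))
      - (‖y‖ / lam) ^ ((2 : ℝ) - (n : ℝ)) * ‖invPt lam y - η‖ ^ ((2 : ℝ) - (n : ℝ)))

theorem integral_rpow_one_sub {q a b : ℝ} (hq : q ≠ 2) (h0 : (0 : ℝ) ∉ uIcc a b) :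
    ∫ t in a..b, t ^ (1 - q) = (a ^ (2 - q) - b ^ (2 - q)) / (q - 2) := by
  rw [integral_rpow (Or.inr ⟨by contrapose! hq; linarith, h0⟩), show 1 - q + 1 = 2 - q by ring]
  have : q - 2 ≠ 0 := sub_ne_zero.2 hq
  field_simp
  ring

theorem rpow_two_sub_sub_rpow_two_sub_div_mem_Icc {q a b : ℝ} (hq : 2 < q) (ha : 0 < a)
    (hab : a ≤ b) :
    (a ^ (2 - q) - b ^ (2 - q)) / (q - 2) ∈
      Icc ((b ^ 2 - a ^ 2) / 2 * b ^ (-q)) ((b ^ 2 - a ^ 2) / 2 * a ^ (-q)) := by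
  have h0 : (0 : ℝ) ∉ uIcc a b := by
    rw [uIcc_of_le hab]
    exact fun h => ha.not_ge h.1
  have hpt : ∀ t ∈ Icc a b, t ^ (1 - q) ∈ Icc (t * b ^ (-q)) (t * a ^ (-q)) := by
    intro t ⟨hat, htb⟩
    have ht : 0 < t := ha.trans_le hat
    rw [sub_eq_add_neg, Real.rpow_add ht, Real.rpow_one]
    have hq' : -q ≤ 0 := by linarith
    exact ⟨mul_le_mul_of_nonneg_left (Real.rpow_le_rpow_of_nonpos ht htb hq') ht.le,
      mul_le_mul_of_nonneg_left (Real.rpow_le_rpow_of_nonpos ha hat hq') ht.le⟩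
  have hint : IntervalIntegrable (fun t : ℝ => t ^ (1 - q)) volume a b :=
    intervalIntegral.intervalIntegrable_rpow (Or.inr h0)
  rw [← integral_rpow_one_sub hq.ne' h0, ← integral_id,
    ← intervalIntegral.integral_mul_const, ← intervalIntegral.integral_mul_const]
  exact ⟨intervalIntegral.integral_mono_on hab
      ((continuous_mul_const _).intervalIntegrable _ _) hint fun t ht => (hpt t ht).1,
    intervalIntegral.integral_mono_on hab hint
      ((continuous_mul_const _).intervalIntegrable _ _) fun t ht => (hpt t ht).2⟩

theorem sphereArea_pos {n : ℕ} (hn : 0 < n) : 0 < sphereArea n := by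
  have hvol : 0 < (volume (ball (0 : Euc n) 1)).toReal :=
    ENNReal.toReal_pos (measure_ball_pos _ 0 one_pos).ne' measure_ball_lt_top.ne
  unfold sphereArea
  positivity

theorem div_mul_norm_invPt_sub_sq {n : ℕ} {lam : ℝ} (hlam : lam ≠ 0) {y : Euc n} (hy : y ≠ 0)
    (η : Euc n) :
    (‖y‖ / lam * ‖invPt lam y - η‖) ^ 2
      = ‖y - η‖ ^ 2 + (‖y‖ ^ 2 - lam ^ 2) * (‖η‖ ^ 2 - lam ^ 2) / lam ^ 2 := by
  have hy' : ‖y‖ ≠ 0 := norm_ne_zero_iff.2 hy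
  rw [mul_pow, norm_sub_sq_real, norm_sub_sq_real, invPt, real_inner_smul_left, norm_smul,
    Real.norm_eq_abs, mul_pow, sq_abs]
  field_simp
  ring

theorem norm_sub_le_div_mul_norm_invPt_sub {n : ℕ} {lam : ℝ} (hlam : 0 < lam) {y η : Euc n}
    (hy : lam ≤ ‖y‖) (hη : lam ≤ ‖η‖) :
    ‖y - η‖ ≤ ‖y‖ / lam * ‖invPt lam y - η‖ := by
  have hD : 0 ≤ (‖y‖ ^ 2 - lam ^ 2) * (‖η‖ ^ 2 - lam ^ 2) :=
    mul_nonneg (by nlinarith) (by nlinarith)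
  refine (pow_le_pow_iff_left₀ (norm_nonneg _) (by positivity) two_ne_zero).1 ?_
  rw [div_mul_norm_invPt_sub_sq hlam.ne' (norm_pos_iff.1 (hlam.trans_le hy))]
  exact le_add_of_nonneg_right (by positivity)

theorem sphereArea_mul_greenG {n : ℕ} (hn : 2 < n) {lam : ℝ} (hlam : 0 ≤ lam) (y η : Euc n) :
    sphereArea n * greenG n lam y η
      = (‖y - η‖ ^ ((2 : ℝ) - n) - (‖y‖ / lam * ‖invPt lam y - η‖) ^ ((2 : ℝ) - n))
          / ((n : ℝ) - 2) := by
  have hσ : sphereArea n ≠ 0 := (sphereArea_pos (by omega)).ne'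
  have hn2 : (n : ℝ) - 2 ≠ 0 := by
    have : (2 : ℝ) < n := by exact_mod_cast hn
    linarith
  rw [greenG, Real.mul_rpow (by positivity) (norm_nonneg _)]
  field_simp

/-- two-sided bound for the Green's function `G_λ`. -/
theorem green_two_sided_bound (n : ℕ) (hn : 3 ≤ n) (lam : ℝ) (hlam : 0 < lam)
    (y η : Euc n) (hy : lam ≤ ‖y‖) (hη : lam ≤ ‖η‖) (hne : y ≠ η) :
    (1 / (2 * lam ^ 2)) * (‖y‖ ^ 2 - lam ^ 2) * (‖η‖ ^ 2 - lam ^ 2)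
        * (lam / ‖y‖) ^ (n : ℝ) * ‖invPt lam y - η‖ ^ (-(n : ℝ))
      ≤ sphereArea n * greenG n lam y η ∧
    sphereArea n * greenG n lam y η
      ≤ (1 / (2 * lam ^ 2)) * (‖y‖ ^ 2 - lam ^ 2) * (‖η‖ ^ 2 - lam ^ 2)
          * ‖y - η‖ ^ (-(n : ℝ)) ∧
    0 ≤ greenG n lam y η := by
  set b := ‖y‖ / lam * ‖invPt lam y - η‖ with hb_def
  have hfactor : 1 / (2 * lam ^ 2) * (‖y‖ ^ 2 - lam ^ 2) * (‖η‖ ^ 2 - lam ^ 2)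
      = (b ^ 2 - ‖y - η‖ ^ 2) / 2 := by
    rw [hb_def, div_mul_norm_invPt_sub_sq hlam.ne' (norm_pos_iff.1 (hlam.trans_le hy))]
    field_simp
    ring
  have hscale : (lam / ‖y‖) ^ (n : ℝ) * ‖invPt lam y - η‖ ^ (-(n : ℝ)) = b ^ (-(n : ℝ)) := by
    rw [hb_def, Real.mul_rpow (by positivity) (norm_nonneg _),
      Real.rpow_neg (div_nonneg (norm_nonneg y) hlam.le), ← Real.inv_rpow (by positivity), inv_div]
  have hab : ‖y - η‖ ≤ b := norm_sub_le_div_mul_norm_invPt_sub hlam hy hη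
  obtain ⟨hlower, hupper⟩ := rpow_two_sub_sub_rpow_two_sub_div_mem_Icc
    (by exact_mod_cast hn : (2 : ℝ) < n) (norm_pos_iff.2 (sub_ne_zero.2 hne)) hab
  have hσG := sphereArea_mul_greenG (by omega) hlam.le y η
  rw [mul_assoc _ ((lam / ‖y‖) ^ (n : ℝ)), hscale, hfactor, hσG]
  refine ⟨hlower, hupper, (mul_nonneg_iff_of_pos_left (sphereArea_pos (n := n) (by omega))).1 ?_⟩
  rw [hσG]
  have hsq := pow_le_pow_left₀ (norm_nonneg _) hab 2
  exact le_trans (mul_nonneg (by linarith) (by positivity)) hlower
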